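/- With φ = φ(a;b,c,d,e,f,g,h) the very well poised balanced ₁₀φ₉ (base q, argument q, a³q² = bcdefgh) which terminates (say h = q^{−n} for some nonnegative integer n), the following three-term relation holds: c(1−c)(1−a/c)(1−dq/b)(1−bd/(aq)) φ(b−,c+) − d(1−d)(1−a/d)(1−cq/b)(1−bc/(aq)) φ(b−,d+) + d(1−b/q)(1−c/d)(1−aq/b)(1−cd/a) φ = 0, where φ(b−,c+) denotes φ with b replaced by b/q and c by cq, and similarly for φ(b−,d+). -/

import Mathlib

open Filter Topology

noncomputable def qp (q x : ℂ) (k : ℕ) : ℂ := ∏ i ∈ Finset.range k, (1 - x * q ^ i)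

noncomputable def qpInf (q x : ℂ) : ℂ := ∏' i : ℕ, (1 - x * q ^ i)

noncomputable def phiTerm (q a b c d e f g h : ℂ) (k : ℕ) : ℂ :=
  qp q a k * (1 - a * q ^ (2 * k)) / (1 - a) *
    (qp q b k * qp q c k * qp q d k * qp q e k * qp q f k * qp q g k * qp q h k) /
    (qp q q k * qp q (a * q / b) k * qp q (a * q / c) k * qp q (a * q / d) k *
      qp q (a * q / e) k * qp q (a * q / f) k * qp q (a * q / g) k * qp q (a * q / h) k) *
    q ^ k

noncomputable def wTerm (q a b c d e f : ℂ) (k : ℕ) : ℂ :=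
  qp q a k * (1 - a * q ^ (2 * k)) / (1 - a) *
    (qp q b k * qp q c k * qp q d k * qp q e k * qp q f k) /
    (qp q q k * qp q (a * q / b) k * qp q (a * q / c) k * qp q (a * q / d) k *
      qp q (a * q / e) k * qp q (a * q / f) k) *
    (a ^ 2 * q ^ 2 / (b * c * d * e * f)) ^ k

noncomputable def W8 (q a b c d e f : ℂ) : ℂ := ∑' k : ℕ, wTerm q a b c d e f k

/-- Terminating very well poised balanced ₁₀φ₉: sum of the first `N` terms. -/
noncomputable def phiT (q a b c d e f g h : ℂ) (N : ℕ) : ℂ :=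
  ∑ k ∈ Finset.range N, phiTerm q a b c d e f g h k

private lemma qp_shift (q x : ℂ) (k : ℕ) :
    (1 - x) * qp q (x * q) k = qp q x k * (1 - x * q ^ k) := by
  induction k with
  | zero => simp [qp]
  | succ m ih =>
    simp only [qp, Finset.prod_range_succ] at ih ⊢
    linear_combination (1 - x * q * q ^ m) * ih

private lemma qp_unshift (q x : ℂ) (hq0 : q ≠ 0) (k : ℕ) :
    qp q (x / q) k * (1 - x / q * q ^ k) = (1 - x / q) * qp q x k := by
  have h := qp_shift q (x / q) k
  rw [div_mul_cancel₀ x hq0] at h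
  exact h.symm

private lemma qp_ne' (q x : ℂ) (k : ℕ) (h : ∀ i : ℕ, 1 - x * q ^ i ≠ 0) :
    qp q x k ≠ 0 :=
  Finset.prod_ne_zero_iff.mpr fun i _ => h i

private lemma star_id (a b c d q X : ℂ)
    (ha0 : a ≠ 0) (hb0 : b ≠ 0) (hc0 : c ≠ 0) (hd0 : d ≠ 0) (hq0 : q ≠ 0) :
    c * (1 - d * q / b) * (1 - b * d / (a * q)) * (1 - c * X) * (1 - a / c * X)
      - d * (1 - c * q / b) * (1 - b * c / (a * q)) * (1 - d * X) * (1 - a / d * X)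
      + d * (1 - c / d) * (1 - c * d / a) * (1 - b / q * X) * (1 - a * q / b * X) = 0 := by
  simp only [div_mul_eq_mul_div]
  simp only [one_sub_div hb0, one_sub_div hc0, one_sub_div hd0, one_sub_div ha0,
    one_sub_div hq0, one_sub_div (mul_ne_zero ha0 hq0)]
  simp only [div_mul_eq_mul_div, mul_div_assoc', div_div_eq_mul_div, div_div]
  rw [div_sub_div _ _ (by apply_rules [mul_ne_zero]) (by apply_rules [mul_ne_zero]),
    div_add_div _ _ (by apply_rules [mul_ne_zero]) (by apply_rules [mul_ne_zero]),
    div_eq_zero_iff]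
  left
  ring

set_option maxHeartbeats 3200000 in
private lemma key_term (q a b c d e f g h : ℂ)
    (hq : ‖q‖ < 1) (hq0 : q ≠ 0)
    (ha0 : a ≠ 0) (hb0 : b ≠ 0) (hc0 : c ≠ 0) (hd0 : d ≠ 0)
    (H : ∀ j : ℕ, (1 - a * q ^ j ≠ 0) ∧ (1 - a / b * q ^ j ≠ 0) ∧ (1 - a / c * q ^ j ≠ 0) ∧
      (1 - a / d * q ^ j ≠ 0) ∧ (1 - a / e * q ^ j ≠ 0) ∧ (1 - a / f * q ^ j ≠ 0) ∧
      (1 - a / g * q ^ j ≠ 0) ∧ (1 - a / h * q ^ j ≠ 0)) (k : ℕ) :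
    c * (1 - c) * (1 - a / c) * (1 - d * q / b) * (1 - b * d / (a * q)) *
        phiTerm q a (b / q) (c * q) d e f g h k
      - d * (1 - d) * (1 - a / d) * (1 - c * q / b) * (1 - b * c / (a * q)) *
        phiTerm q a (b / q) c (d * q) e f g h k
      + d * (1 - b / q) * (1 - c / d) * (1 - a * q / b) * (1 - c * d / a) *
        phiTerm q a b c d e f g h k = 0 := by
  -- basic nonvanishing facts
  have h1a : (1 : ℂ) - a ≠ 0 := by simpa using (H 0).1
  have hQfac : ∀ i : ℕ, (1 : ℂ) - q * q ^ i ≠ 0 := by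
    intro i h0
    have h1 : q * q ^ i = 1 := by linear_combination -h0
    have h2 : ‖q‖ ^ (i + 1) = 1 := by
      rw [pow_succ, mul_comm, ← norm_pow, ← norm_mul, h1, norm_one]
    have h3 : ‖q‖ ^ (i + 1) < 1 :=
      pow_lt_one₀ (norm_nonneg _) hq (Nat.succ_ne_zero i)
    linarith
  have hQk : qp q q k ≠ 0 := qp_ne' q q k hQfac
  have hAB : qp q (a * q / b) k ≠ 0 :=
    qp_ne' _ _ _ fun i h0 => (H (i + 1)).2.1 (by linear_combination h0)
  have hAC : qp q (a * q / c) k ≠ 0 :=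
    qp_ne' _ _ _ fun i h0 => (H (i + 1)).2.2.1 (by linear_combination h0)
  have hAD : qp q (a * q / d) k ≠ 0 :=
    qp_ne' _ _ _ fun i h0 => (H (i + 1)).2.2.2.1 (by linear_combination h0)
  have hAE : qp q (a * q / e) k ≠ 0 :=
    qp_ne' _ _ _ fun i h0 => (H (i + 1)).2.2.2.2.1 (by linear_combination h0)
  have hAF : qp q (a * q / f) k ≠ 0 :=
    qp_ne' _ _ _ fun i h0 => (H (i + 1)).2.2.2.2.2.1 (by linear_combination h0)
  have hAG : qp q (a * q / g) k ≠ 0 :=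
    qp_ne' _ _ _ fun i h0 => (H (i + 1)).2.2.2.2.2.2.1 (by linear_combination h0)
  have hAH : qp q (a * q / h) k ≠ 0 :=
    qp_ne' _ _ _ fun i h0 => (H (i + 1)).2.2.2.2.2.2.2 (by linear_combination h0)
  have hAB2 : qp q (a * q / b * q) k ≠ 0 :=
    qp_ne' _ _ _ fun i h0 => (H (i + 2)).2.1 (by linear_combination h0)
  have hAB2' : qp q (a * q * q / b) k ≠ 0 := by
    rwa [show a * q * q / b = a * q / b * q from (div_mul_eq_mul_div _ _ _).symm]
  have hAC2 : qp q (a / c) k ≠ 0 := qp_ne' _ _ _ fun i => (H i).2.2.1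
  have hAD2 : qp q (a / d) k ≠ 0 := qp_ne' _ _ _ fun i => (H i).2.2.2.1
  have h1ab : (1 : ℂ) - a * q / b ≠ 0 := fun h0 => (H 1).2.1 (by linear_combination h0)
  have h1ac : (1 : ℂ) - a / c ≠ 0 := by simpa using (H 0).2.2.1
  have h1ad : (1 : ℂ) - a / d ≠ 0 := by simpa using (H 0).2.2.2.1
  have hXac : (1 : ℂ) - a / c * q ^ k ≠ 0 := (H k).2.2.1
  have hXac' : (1 : ℂ) - a * q ^ k / c ≠ 0 := fun h0 => hXac (by linear_combination h0)
  have hXad : (1 : ℂ) - a / d * q ^ k ≠ 0 := (H k).2.2.2.1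
  have hXad' : (1 : ℂ) - a * q ^ k / d ≠ 0 := fun h0 => hXad (by linear_combination h0)
  have hXab : (1 : ℂ) - a * q / b * q ^ k ≠ 0 := fun h0 => (H (k + 1)).2.1 (by linear_combination h0)
  have hXab' : (1 : ℂ) - a * q * q ^ k / b ≠ 0 := fun h0 => hXab (by linear_combination h0)
  -- argument normalisations
  have hargb : a * q / (b / q) = a * q / b * q := by
    rw [div_div_eq_mul_div, div_mul_eq_mul_div]
  have hargc : a * q / (c * q) = a / c := by
    rw [mul_comm c q, ← div_div, mul_div_assoc, div_self hq0, mul_one]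
  have hargd : a * q / (d * q) = a / d := by
    rw [mul_comm d q, ← div_div, mul_div_assoc, div_self hq0, mul_one]
  -- contiguity relations for qp
  have eB := qp_unshift q b hq0 k
  have eC := qp_shift q c k
  have eD := qp_shift q d k
  have eAB := qp_shift q (a * q / b) k
  have eAC : qp q (a / c) k * (1 - a / c * q ^ k) = (1 - a / c) * qp q (a * q / c) k := by
    have h2 := qp_unshift q (a * q / c) hq0 k
    rw [show a * q / c / q = a / c by
      rw [div_div, mul_comm c q, ← div_div, mul_div_assoc, div_self hq0, mul_one]] at h2
    exact h2
  have eAD : qp q (a / d) k * (1 - a / d * q ^ k) = (1 - a / d) * qp q (a * q / d) k := by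
    have h2 := qp_unshift q (a * q / d) hq0 k
    rw [show a * q / d / q = a / d by
      rw [div_div, mul_comm d q, ← div_div, mul_div_assoc, div_self hq0, mul_one]] at h2
    exact h2
  have hAC' : qp q (a / c) k = (1 - a / c) * qp q (a * q / c) k / (1 - a / c * q ^ k) :=
    (eq_div_iff hXac).mpr eAC
  have hAD' : qp q (a / d) k = (1 - a / d) * qp q (a * q / d) k / (1 - a / d * q ^ k) :=
    (eq_div_iff hXad).mpr eAD
  have hAB' : qp q (a * q / b * q) k
      = qp q (a * q / b) k * (1 - a * q / b * q ^ k) / (1 - a * q / b) :=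
    (eq_div_iff h1ab).mpr (by linear_combination eAB)
  by_cases hk0 : k = 0
  · subst hk0
    simp only [phiTerm, qp, Finset.range_zero, Finset.prod_empty, pow_zero, mul_zero,
      mul_one, one_mul, div_one, div_self h1a]
    field_simp
    ring
  obtain ⟨m, rfl⟩ := Nat.exists_eq_succ_of_ne_zero hk0
  simp only [Nat.succ_eq_add_one] at *
  by_cases hc1 : c = 1
  · subst hc1
    have hC0 : qp q 1 (m + 1) = 0 := by
      simp only [qp]
      exact Finset.prod_eq_zero (Finset.mem_range.mpr (Nat.succ_pos m)) (by simp)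
    simp [phiTerm, hC0]
  by_cases hd1 : d = 1
  · subst hd1
    have hD0 : qp q 1 (m + 1) = 0 := by
      simp only [qp]
      exact Finset.prod_eq_zero (Finset.mem_range.mpr (Nat.succ_pos m)) (by simp)
    simp [phiTerm, hD0]
  have h1c : (1 : ℂ) - c ≠ 0 := sub_ne_zero.mpr (Ne.symm hc1)
  have h1d : (1 : ℂ) - d ≠ 0 := sub_ne_zero.mpr (Ne.symm hd1)
  have hC' : qp q (c * q) (m + 1)
      = qp q c (m + 1) * (1 - c * q ^ (m + 1)) / (1 - c) :=
    (eq_div_iff h1c).mpr (by linear_combination eC)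
  have hD' : qp q (d * q) (m + 1)
      = qp q d (m + 1) * (1 - d * q ^ (m + 1)) / (1 - d) :=
    (eq_div_iff h1d).mpr (by linear_combination eD)
  -- the common spectator factor
  set Sp : ℂ := qp q a (m + 1) * (1 - a * q ^ (2 * (m + 1))) / (1 - a) *
      (qp q e (m + 1) * qp q f (m + 1) * qp q g (m + 1) * qp q h (m + 1)) /
      (qp q q (m + 1) * qp q (a * q / e) (m + 1) * qp q (a * q / f) (m + 1) *
        qp q (a * q / g) (m + 1) * qp q (a * q / h) (m + 1)) * q ^ (m + 1) with hSp
  have hphi1 : phiTerm q a (b / q) (c * q) d e f g h (m + 1)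
      = Sp * (qp q (b / q) (m + 1) * qp q (c * q) (m + 1) * qp q d (m + 1) /
          (qp q (a * q / b * q) (m + 1) * qp q (a / c) (m + 1) * qp q (a * q / d) (m + 1))) := by
    simp only [phiTerm]
    rw [hargb, hargc, hSp]
    simp only [div_mul_eq_mul_div, mul_div_assoc', div_div_eq_mul_div, div_div]
    rw [div_eq_div_iff (by apply_rules [mul_ne_zero]) (by apply_rules [mul_ne_zero])]
    ring
  have hphi2 : phiTerm q a (b / q) c (d * q) e f g h (m + 1)
      = Sp * (qp q (b / q) (m + 1) * qp q c (m + 1) * qp q (d * q) (m + 1) /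
          (qp q (a * q / b * q) (m + 1) * qp q (a * q / c) (m + 1) * qp q (a / d) (m + 1))) := by
    simp only [phiTerm]
    rw [hargb, hargd, hSp]
    simp only [div_mul_eq_mul_div, mul_div_assoc', div_div_eq_mul_div, div_div]
    rw [div_eq_div_iff (by apply_rules [mul_ne_zero]) (by apply_rules [mul_ne_zero])]
    ring
  have hphi3 : phiTerm q a b c d e f g h (m + 1)
      = Sp * (qp q b (m + 1) * qp q c (m + 1) * qp q d (m + 1) /
          (qp q (a * q / b) (m + 1) * qp q (a * q / c) (m + 1) * qp q (a * q / d) (m + 1))) := by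
    simp only [phiTerm]
    rw [hSp]
    simp only [div_mul_eq_mul_div, mul_div_assoc', div_div_eq_mul_div, div_div]
    rw [div_eq_div_iff (by apply_rules [mul_ne_zero]) (by apply_rules [mul_ne_zero])]
    ring
  rw [hphi1, hphi2, hphi3]
  have st := star_id a b c d q (q ^ (m + 1)) ha0 hb0 hc0 hd0 hq0
  by_cases hbq : b * q ^ m = 1
  · -- here qp q b (m+1) = 0, so the third term vanishes
    have hB0 : qp q b (m + 1) = 0 := by
      simp only [qp]
      exact Finset.prod_eq_zero (Finset.self_mem_range_succ m) (by rw [hbq]; exact sub_self 1)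
    have h1 : (1 : ℂ) - b / q * q ^ (m + 1) = 0 := by
      rw [show b / q * q ^ (m + 1) = b * q ^ m by
        rw [pow_succ', ← mul_assoc, div_mul_cancel₀ b hq0], hbq]
      ring
    have hs : c * (1 - d * q / b) * (1 - b * d / (a * q)) * (1 - c * q ^ (m + 1)) *
          (1 - a / c * q ^ (m + 1))
        - d * (1 - c * q / b) * (1 - b * c / (a * q)) * (1 - d * q ^ (m + 1)) *
          (1 - a / d * q ^ (m + 1)) = 0 := by
      linear_combination st - (d * (1 - c / d) * (1 - c * d / a) * (1 - a * q / b * q ^ (m + 1))) * h1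
    have hM1 : c * (1 - c) * (1 - a / c) * (1 - d * q / b) * (1 - b * d / (a * q)) *
          (qp q (b / q) (m + 1) * qp q (c * q) (m + 1) * qp q d (m + 1) /
            (qp q (a * q / b * q) (m + 1) * qp q (a / c) (m + 1) * qp q (a * q / d) (m + 1)))
        = qp q (b / q) (m + 1) * qp q c (m + 1) * qp q d (m + 1) /
            (qp q (a * q / b * q) (m + 1) * qp q (a * q / c) (m + 1) * qp q (a * q / d) (m + 1)) *
          (c * (1 - d * q / b) * (1 - b * d / (a * q)) * (1 - c * q ^ (m + 1)) *
            (1 - a / c * q ^ (m + 1))) := by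
      rw [hC', hAC']
      simp only [div_mul_eq_mul_div, mul_div_assoc', div_div_eq_mul_div, div_div]
      rw [div_eq_div_iff (by apply_rules [mul_ne_zero]) (by apply_rules [mul_ne_zero])]
      ring
    have hM2 : d * (1 - d) * (1 - a / d) * (1 - c * q / b) * (1 - b * c / (a * q)) *
          (qp q (b / q) (m + 1) * qp q c (m + 1) * qp q (d * q) (m + 1) /
            (qp q (a * q / b * q) (m + 1) * qp q (a * q / c) (m + 1) * qp q (a / d) (m + 1)))
        = qp q (b / q) (m + 1) * qp q c (m + 1) * qp q d (m + 1) /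
            (qp q (a * q / b * q) (m + 1) * qp q (a * q / c) (m + 1) * qp q (a * q / d) (m + 1)) *
          (d * (1 - c * q / b) * (1 - b * c / (a * q)) * (1 - d * q ^ (m + 1)) *
            (1 - a / d * q ^ (m + 1))) := by
      rw [hD', hAD']
      simp only [div_mul_eq_mul_div, mul_div_assoc', div_div_eq_mul_div, div_div]
      rw [div_eq_div_iff (by apply_rules [mul_ne_zero]) (by apply_rules [mul_ne_zero])]
      ring
    rw [hB0]
    linear_combination Sp * hM1 - Sp * hM2 +
      (Sp * (qp q (b / q) (m + 1) * qp q c (m + 1) * qp q d (m + 1) /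
        (qp q (a * q / b * q) (m + 1) * qp q (a * q / c) (m + 1) * qp q (a * q / d) (m + 1)))) * hs
  · have hnebq : (1 : ℂ) - b / q * q ^ (m + 1) ≠ 0 := by
      rw [show b / q * q ^ (m + 1) = b * q ^ m by
        rw [pow_succ', ← mul_assoc, div_mul_cancel₀ b hq0]]
      exact sub_ne_zero.mpr (Ne.symm hbq)
    have hnebq' : (1 : ℂ) - b * q ^ (m + 1) / q ≠ 0 := fun h0 => hnebq (by linear_combination h0)
    have hB' : qp q (b / q) (m + 1)
        = (1 - b / q) * qp q b (m + 1) / (1 - b / q * q ^ (m + 1)) :=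
      (eq_div_iff hnebq).mpr eB
    set M : ℂ := (1 - b / q) * (1 - a * q / b) *
        (qp q b (m + 1) * qp q c (m + 1) * qp q d (m + 1)) /
        ((1 - b / q * q ^ (m + 1)) * (1 - a * q / b * q ^ (m + 1)) *
          (qp q (a * q / b) (m + 1) * qp q (a * q / c) (m + 1) * qp q (a * q / d) (m + 1))) with hM
    have hM1 : c * (1 - c) * (1 - a / c) * (1 - d * q / b) * (1 - b * d / (a * q)) *
          (qp q (b / q) (m + 1) * qp q (c * q) (m + 1) * qp q d (m + 1) /
            (qp q (a * q / b * q) (m + 1) * qp q (a / c) (m + 1) * qp q (a * q / d) (m + 1)))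
        = M * (c * (1 - d * q / b) * (1 - b * d / (a * q)) * (1 - c * q ^ (m + 1)) *
            (1 - a / c * q ^ (m + 1))) := by
      rw [hB', hC', hAB', hAC', hM]
      simp only [div_mul_eq_mul_div, mul_div_assoc', div_div_eq_mul_div, div_div]
      rw [div_eq_div_iff (by apply_rules [mul_ne_zero]) (by apply_rules [mul_ne_zero])]
      ring
    have hM2 : d * (1 - d) * (1 - a / d) * (1 - c * q / b) * (1 - b * c / (a * q)) *
          (qp q (b / q) (m + 1) * qp q c (m + 1) * qp q (d * q) (m + 1) /
            (qp q (a * q / b * q) (m + 1) * qp q (a * q / c) (m + 1) * qp q (a / d) (m + 1)))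
        = M * (d * (1 - c * q / b) * (1 - b * c / (a * q)) * (1 - d * q ^ (m + 1)) *
            (1 - a / d * q ^ (m + 1))) := by
      rw [hB', hD', hAB', hAD', hM]
      simp only [div_mul_eq_mul_div, mul_div_assoc', div_div_eq_mul_div, div_div]
      rw [div_eq_div_iff (by apply_rules [mul_ne_zero]) (by apply_rules [mul_ne_zero])]
      ring
    have hM3 : d * (1 - b / q) * (1 - c / d) * (1 - a * q / b) * (1 - c * d / a) *
          (qp q b (m + 1) * qp q c (m + 1) * qp q d (m + 1) /
            (qp q (a * q / b) (m + 1) * qp q (a * q / c) (m + 1) * qp q (a * q / d) (m + 1)))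
        = M * (d * (1 - c / d) * (1 - c * d / a) * (1 - b / q * q ^ (m + 1)) *
            (1 - a * q / b * q ^ (m + 1))) := by
      rw [hM]
      simp only [div_mul_eq_mul_div, mul_div_assoc', div_div_eq_mul_div, div_div]
      rw [div_eq_div_iff (by apply_rules [mul_ne_zero]) (by apply_rules [mul_ne_zero])]
      ring
    linear_combination Sp * hM1 - Sp * hM2 + Sp * hM3 + (Sp * M) * st

/-- Relation (2.4) of the paper: a three-term contiguous relation for the
terminating very well poised balanced ₁₀φ₉ (with h = q^{-n}). -/
theorem stmt_1 (q a b c d e f g h : ℂ) (n : ℕ)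
    (hq : ‖q‖ < 1) (hq0 : q ≠ 0)
    (ha0 : a ≠ 0) (hb0 : b ≠ 0) (hc0 : c ≠ 0) (hd0 : d ≠ 0) (he0 : e ≠ 0)
    (hf0 : f ≠ 0) (hg0 : g ≠ 0)
    (hh : h = q ^ (-(n : ℤ)))
    (hbal : a ^ 3 * q ^ 2 = b * c * d * e * f * g * h)
    (hnz : ∀ k : ℤ, (1 - a * q ^ k ≠ 0) ∧ (1 - a / b * q ^ k ≠ 0) ∧ (1 - a / c * q ^ k ≠ 0) ∧
      (1 - a / d * q ^ k ≠ 0) ∧ (1 - a / e * q ^ k ≠ 0) ∧ (1 - a / f * q ^ k ≠ 0) ∧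
      (1 - a / g * q ^ k ≠ 0) ∧ (1 - a / h * q ^ k ≠ 0)) :
    c * (1 - c) * (1 - a / c) * (1 - d * q / b) * (1 - b * d / (a * q)) *
        phiT q a (b / q) (c * q) d e f g h (n + 2)
      - d * (1 - d) * (1 - a / d) * (1 - c * q / b) * (1 - b * c / (a * q)) *
        phiT q a (b / q) c (d * q) e f g h (n + 2)
      + d * (1 - b / q) * (1 - c / d) * (1 - a * q / b) * (1 - c * d / a) *
        phiT q a b c d e f g h (n + 2) = 0 := by
  have H : ∀ j : ℕ, (1 - a * q ^ j ≠ 0) ∧ (1 - a / b * q ^ j ≠ 0) ∧ (1 - a / c * q ^ j ≠ 0) ∧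
      (1 - a / d * q ^ j ≠ 0) ∧ (1 - a / e * q ^ j ≠ 0) ∧ (1 - a / f * q ^ j ≠ 0) ∧
      (1 - a / g * q ^ j ≠ 0) ∧ (1 - a / h * q ^ j ≠ 0) := fun j => by
    simpa using hnz (j : ℤ)
  have key := key_term q a b c d e f g h hq hq0 ha0 hb0 hc0 hd0 H
  simp only [phiT, Finset.mul_sum, ← Finset.sum_sub_distrib, ← Finset.sum_add_distrib]
  exact Finset.sum_eq_zero fun k _ => key k
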